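/- Let k be a commutative ring and A a commutative k-algebra that is flat as a k-module. Let J ⊆ A be an ideal, S = A/J with quotient map π: A → S, and I_{Δ_A} = ker(μ_A: A⊗_kA → A) the kernel of the multiplication map. Then the natural (S⊗_kA)-linear map I_{Δ_A} ⊗_{A⊗_kA} (S⊗_kA) → S⊗_kA, induced by the inclusion I_{Δ_A} ⊆ A⊗_kA followed by the quotient map A⊗_kA → S⊗_kA, is injective, and its image equals the kernel of the map S⊗_kA → S determined by s⊗a ↦ s·π(a). (This is the affine form of the identification I_{Δ_A}|_{X×A} ≅ I_{Δ_X ⊂ X×A} for the closed embedding X = Spec S ⊆ A = Spec A.) -/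

import Mathlib

/-!
Write `R = A ⊗[k] A` and `T = S ⊗[k] A`, a quotient of `R` by `K = ker (π ⊗ id)`. Since `R → T` is
surjective, every element of `I_{Δ_A} ⊗_R T` has the form `i ⊗ 1`, which maps to the image of `i`.
So the map is injective as soon as `I_{Δ_A} ∩ K ⊆ K · I_{Δ_A}`, and its image is the image of
`I_{Δ_A}` in `T`. By right exactness of `⊗`, `K` is generated by `J ⊗ 1`, and `x ↦ x - μ(x) ⊗ 1` is
a retraction of `R` onto `I_{Δ_A}` that is linear for `A` acting on the left factor; this gives the
inclusion, and it also lifts every element of `ker (T → S)` to `I_{Δ_A}`.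
-/

open TensorProduct

noncomputable section

variable (k A : Type) [CommRing k] [CommRing A] [Algebra k A] (J : Ideal A)

/-- The multiplication map `μ_A : A ⊗[k] A → A`. -/
abbrev mulMap : A ⊗[k] A →ₐ[k] A := Algebra.TensorProduct.lmul' k

/-- The ideal `I_{Δ_A}` of the diagonal: the kernel of the multiplication map. -/
abbrev diagIdeal : Ideal (A ⊗[k] A) := RingHom.ker (mulMap k A).toRingHom

/-- The quotient map `π : A → S = A/J`. -/
abbrev qmap : A →ₐ[k] A ⧸ J := Ideal.Quotient.mkₐ k J

/-- The map `A ⊗[k] A → S ⊗[k] A` induced by `π` on the first factor. -/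
abbrev toSA : A ⊗[k] A →ₐ[k] (A ⧸ J) ⊗[k] A :=
  Algebra.TensorProduct.map (qmap k A J) (AlgHom.id k A)

/-- `S ⊗[k] A` as an `(A ⊗[k] A)`-algebra via `π ⊗ id`. -/
def SAalgebra : Algebra (A ⊗[k] A) ((A ⧸ J) ⊗[k] A) := (toSA k A J).toRingHom.toAlgebra

attribute [local instance] SAalgebra

/-- The natural map `I_{Δ_A} ⊗_{A⊗A} (S ⊗[k] A) → S ⊗[k] A`, induced by the inclusion
`I_{Δ_A} ⊆ A ⊗[k] A` followed by the quotient map `A ⊗[k] A → S ⊗[k] A`. -/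
def natMap :
    (diagIdeal k A) ⊗[A ⊗[k] A] ((A ⧸ J) ⊗[k] A) →ₗ[A ⊗[k] A] (A ⧸ J) ⊗[k] A :=
  TensorProduct.lift
    ((LinearMap.lsmul (A ⊗[k] A) ((A ⧸ J) ⊗[k] A)).comp (Submodule.subtype (diagIdeal k A)))

/-- The map `S ⊗[k] A → S`, `s ⊗ a ↦ s · π(a)`. -/
def multMapSA : (A ⧸ J) ⊗[k] A →ₐ[k] A ⧸ J :=
  Algebra.TensorProduct.lift (AlgHom.id k (A ⧸ J)) (qmap k A J) fun _ _ => Commute.all _ _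


section SurjectiveAlgebra

variable {R T : Type*} [CommRing R] [CommRing T] [Algebra R T] {I : Ideal R}

theorem tmul_one_eq_zero_of_mem_ker_mul {x : R} (hx : x ∈ RingHom.ker (algebraMap R T) * I) :
    (⟨x, Ideal.mul_le_right hx⟩ : I) ⊗ₜ[R] (1 : T) = 0 := by
  induction hx using Submodule.mul_induction_on' with
  | mem_mul_mem r hr i hi =>
    rw [show (⟨r * i, _⟩ : I) = r • ⟨i, hi⟩ from rfl, TensorProduct.smul_tmul, Algebra.smul_def,
      mul_one, RingHom.mem_ker.mp hr, TensorProduct.tmul_zero]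
  | add x hx y hy hx0 hy0 =>
    rw [show (⟨x + y, _⟩ : I) = ⟨x, Ideal.mul_le_right hx⟩ + ⟨y, Ideal.mul_le_right hy⟩ from rfl,
      TensorProduct.add_tmul, hx0, hy0, add_zero]

variable (h : Function.Surjective (algebraMap R T))
include h

theorem exists_tmul_one_eq {M : Type*} [AddCommGroup M] [Module R M] (t : M ⊗[R] T) :
    ∃ m : M, m ⊗ₜ (1 : T) = t := by
  induction t using TensorProduct.induction_on with
  | zero => exact ⟨0, TensorProduct.zero_tmul _ _⟩
  | tmul m s =>
    obtain ⟨r, rfl⟩ := h s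
    exact ⟨r • m, by rw [TensorProduct.smul_tmul, Algebra.smul_def, mul_one]⟩
  | add t₁ t₂ ht₁ ht₂ =>
    obtain ⟨m₁, rfl⟩ := ht₁
    obtain ⟨m₂, rfl⟩ := ht₂
    exact ⟨m₁ + m₂, TensorProduct.add_tmul _ _ _⟩

theorem injective_lift_lsmul_subtype
    (hI : I ⊓ RingHom.ker (algebraMap R T) ≤ RingHom.ker (algebraMap R T) * I) :
    Function.Injective (TensorProduct.lift ((LinearMap.lsmul R T).comp I.subtype)) := by
  refine (injective_iff_map_eq_zero _).mpr fun t ht => ?_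
  obtain ⟨⟨x, hxI⟩, rfl⟩ := exists_tmul_one_eq h t
  have hx : algebraMap R T x = 0 := by simpa [Algebra.smul_def] using ht
  exact tmul_one_eq_zero_of_mem_ker_mul (hI ⟨hxI, hx⟩)

theorem mem_range_lift_lsmul_subtype_iff (y : T) :
    y ∈ LinearMap.range (TensorProduct.lift ((LinearMap.lsmul R T).comp I.subtype)) ↔
      ∃ x ∈ I, algebraMap R T x = y := by
  constructor
  · rintro ⟨t, rfl⟩
    obtain ⟨⟨x, hxI⟩, rfl⟩ := exists_tmul_one_eq h t
    exact ⟨x, hxI, by simp [Algebra.smul_def]⟩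
  · rintro ⟨x, hxI, rfl⟩
    exact ⟨⟨x, hxI⟩ ⊗ₜ 1, by simp [Algebra.smul_def]⟩

end SurjectiveAlgebra

theorem Ideal.inf_map_le_map_mul_of_projection {B R : Type*} [CommRing B] [CommRing R]
    [Algebra B R] (I : Ideal R) (L : Ideal B) (p : R →ₗ[B] R) (hp_mem : ∀ x, p x ∈ I)
    (hp_id : ∀ x ∈ I, p x = x) :
    I ⊓ L.map (algebraMap B R) ≤ L.map (algebraMap B R) * I := by
  intro x hx
  obtain ⟨hxI, hxL⟩ := Submodule.mem_inf.mp hx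
  rw [← hp_id x hxI]
  clear hx hxI
  rw [← Submodule.restrictScalars_mem B, ← Ideal.smul_top_eq_map] at hxL
  induction hxL using Submodule.smul_induction_on' with
  | smul l hl y _ =>
    rw [p.map_smul, Algebra.smul_def]
    exact Ideal.mul_mem_mul (Ideal.mem_map_of_mem _ hl) (hp_mem y)
  | add y _ z _ hy hz => simpa using Ideal.add_mem _ hy hz

def diagProj : A ⊗[k] A →ₗ[A] A ⊗[k] A where
  toFun x := x - mulMap k A x ⊗ₜ 1
  map_add' x y := by rw [map_add, add_tmul]; abel
  map_smul' a x := by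
    have hμ : mulMap k A (a • x) = a • mulMap k A x := by
      rw [Algebra.smul_def, map_mul]
      simp
    rw [RingHom.id_apply, smul_sub, TensorProduct.smul_tmul', hμ]

theorem diagProj_mem (x : A ⊗[k] A) : diagProj k A x ∈ diagIdeal k A := by
  simp [diagProj, RingHom.mem_ker]

theorem diagProj_of_mem {x : A ⊗[k] A} (hx : x ∈ diagIdeal k A) : diagProj k A x = x := by
  have hμ : mulMap k A x = 0 := hx
  simp [diagProj, hμ]

theorem toSA_surjective : Function.Surjective (toSA k A J) :=
  Algebra.TensorProduct.map_surjective _ _ Ideal.Quotient.mk_surjective Function.surjective_id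

theorem ker_toSA : RingHom.ker (toSA k A J) = J.map (algebraMap A (A ⊗[k] A)) := by
  rw [Algebra.TensorProduct.rTensor_ker _ Ideal.Quotient.mk_surjective,
    ← RingHom.ker_coe_toRingHom, Ideal.Quotient.mkₐ_ker]
  rfl

theorem multMapSA_toSA (x : A ⊗[k] A) :
    multMapSA k A J (toSA k A J x) = qmap k A J (mulMap k A x) := by
  induction x using TensorProduct.induction_on with
  | zero => simp
  | tmul a b => simp [multMapSA]
  | add u v hu hv => simp only [map_add, hu, hv]

theorem exists_mem_diagIdeal_toSA_eq_iff (x : A ⊗[k] A) :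
    (∃ i ∈ diagIdeal k A, toSA k A J i = toSA k A J x) ↔ multMapSA k A J (toSA k A J x) = 0 := by
  rw [multMapSA_toSA]
  constructor
  · rintro ⟨i, hi, hix⟩
    have hμ : mulMap k A i = 0 := hi
    rw [← multMapSA_toSA, ← hix, multMapSA_toSA, hμ, map_zero]
  · intro hx
    refine ⟨diagProj k A x, diagProj_mem k A x, ?_⟩
    simp [diagProj, hx]

theorem statement0 :
    Function.Injective (natMap k A J) ∧
      ∀ y : (A ⧸ J) ⊗[k] A, y ∈ LinearMap.range (natMap k A J) ↔ multMapSA k A J y = 0 := by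
  have hsurj : Function.Surjective (algebraMap (A ⊗[k] A) ((A ⧸ J) ⊗[k] A)) :=
    toSA_surjective k A J
  refine ⟨injective_lift_lsmul_subtype hsurj ?_, fun y => ?_⟩
  · rw [show RingHom.ker (algebraMap (A ⊗[k] A) ((A ⧸ J) ⊗[k] A)) = _ from ker_toSA k A J]
    exact Ideal.inf_map_le_map_mul_of_projection _ J (diagProj k A) (diagProj_mem k A)
      fun _ => diagProj_of_mem k A
  · obtain ⟨x, rfl⟩ := hsurj y
    rw [natMap, mem_range_lift_lsmul_subtype_iff hsurj]
    exact exists_mem_diagIdeal_toSA_eq_iff k A J x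

end
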